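/- Let s ≥ 2 and let C ⊆ Z_{2^s}^n be a subgroup such that Φ(C) is a binary Hadamard code of length N = 2^{s−1}·n. Then for every i ∈ {1,…,s}, the binary code Φ(C_i) is a binary Hadamard code of length 2^{s−i+1}·N. -/

import Mathlib

/-- The `i`-th digit of the binary expansion of `u : ZMod (2^s)`. -/
def gdigit (s : ℕ) (u : ZMod (2^s)) (i : ℕ) : ZMod 2 :=
  if (ZMod.val u).testBit i then 1 else 0

/-- Carlet's generalized Gray map `φ : ZMod (2^s) → (Z_2^{s-1} → Z_2)`:
the coordinate indexed by `y ∈ Z_2^{s-1}` is `u_{s-1} + ∑ u_i y_i`. -/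
def gray (s : ℕ) (u : ZMod (2^s)) : (Fin (s - 1) → ZMod 2) → ZMod 2 :=
  fun y => gdigit s u (s - 1) + ∑ i : Fin (s - 1), gdigit s u (i : ℕ) * y i

/-- The coordinatewise extension `Φ` of the Gray map, on vectors indexed by `ι`. -/
def PhiMap {ι : Type} (s : ℕ) (u : ι → ZMod (2^s)) :
    ι × (Fin (s - 1) → ZMod 2) → ZMod 2 :=
  fun p => gray s (u p.1) p.2

/-- The `m`-fold replication `(c,c,…,c)` of a vector `c` of length `n`. -/
def replicate {α : Type} (m n : ℕ) (c : Fin n → α) : Fin (m * n) → α :=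
  fun k => c ⟨(k : ℕ) % n, Nat.mod_lt _ (Nat.pos_of_ne_zero (fun h => by
    have hk := k.isLt
    simp [h] at hk))⟩

/-- The vector `w_i` made of `2^{s-i+1}` consecutive constant blocks of length `n`,
the `j`-th block having all entries equal to `j·2^{i-1}`. -/
def wRep (s n i : ℕ) : Fin (2 ^ (s - i + 1) * n) → ZMod (2^s) :=
  fun k => (((k : ℕ) / n : ℕ) : ZMod (2^s)) * 2 ^ (i - 1)

/-- The code `C_i = {(c,…,c) + λ·w_i : c ∈ C, λ ∈ Z_{2^s}}`. -/
def Ci (s n : ℕ) (C : Set (Fin n → ZMod (2^s))) (i : ℕ) :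
    Set (Fin (2 ^ (s - i + 1) * n) → ZMod (2^s)) :=
  {x | ∃ c ∈ C, ∃ lam : ZMod (2^s), x = replicate (2 ^ (s - i + 1)) n c + lam • wRep s n i}

/-- A binary Hadamard code of length `N`: length `N`, `2N` codewords,
and minimum Hamming distance `N/2`. -/
def IsHadamardCode {ι : Type} [Fintype ι] (C : Set (ι → ZMod 2)) (N : ℕ) : Prop :=
  Fintype.card ι = N ∧ Nat.card C = 2 * N ∧
  IsLeast {d | ∃ x ∈ C, ∃ y ∈ C, x ≠ y ∧ hammingDist x y = d} (N / 2)

/-!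
The Gray map carries the homogeneous weight of `ZMod (2^s)` (`0`, `2^(s-1)` or `2^(s-2)`
according as an element is `0`, `2^(s-1)` or anything else) to the Hamming weight: if two
arguments differ in a low binary digit `j`, flipping `y_j` swaps the coordinates where their Gray
images agree with those where they differ, so they differ in exactly half of them. So both codes
are governed by the homogeneous weights of the subgroups `C` and `C_i`.

On its `j`-th block a word of `C_i` reads `c + j • α` with `α = λ 2^(i-1)`. If `α = 0`, its weight
is `2^(s-i+1)` times that of `c`. Otherwise the multiples of `α` contain `2^(s-1)`, the unique
element of order two, and `w x + w (x + 2^(s-1)) = 2^(s-1)` for all `x`; so, shifting the block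
index, every coordinate of `c` contributes exactly `2^(s-i+1) 2^(s-2)`, which is at least the
minimum. The size grows by the same factor, since `(c, λ mod 2^(s-i+1))` parametrizes `C_i`
injectively.
-/

open Finset

namespace CarletGray

variable {s : ℕ}

def half (s : ℕ) : ZMod (2 ^ s) := ((2 ^ (s - 1) : ℕ) : ZMod (2 ^ s))

lemma two_pow_pred_add_self (hs : 1 ≤ s) : 2 ^ (s - 1) + 2 ^ (s - 1) = 2 ^ s := by
  rw [← two_mul, ← pow_succ', Nat.sub_add_cancel hs]

lemma two_pow_pred_eq_two_mul (hs : 2 ≤ s) : 2 ^ (s - 1) = 2 * 2 ^ (s - 2) := by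
  rw [← pow_succ']
  congr 1
  omega

lemma val_half (hs : 1 ≤ s) : (half s).val = 2 ^ (s - 1) :=
  ZMod.val_natCast_of_lt (Nat.pow_lt_pow_right one_lt_two (by omega))

lemma half_ne_zero (hs : 1 ≤ s) : half s ≠ 0 := by
  intro h
  have := val_half hs
  rw [h, ZMod.val_zero] at this
  exact (pow_pos two_pos _).ne this

lemma half_add_half (hs : 1 ≤ s) : half s + half s = 0 := by
  rw [half, ← Nat.cast_add, two_pow_pred_add_self hs, ZMod.natCast_self]

lemma dvd_val_iff_eq_zero_or_eq_half (hs : 1 ≤ s) (x : ZMod (2 ^ s)) :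
    2 ^ (s - 1) ∣ x.val ↔ x = 0 ∨ x = half s := by
  constructor
  · rintro ⟨q, hq⟩
    have hq2 : q < 2 := by
      refine Nat.lt_of_mul_lt_mul_left (a := 2 ^ (s - 1)) ?_
      rw [← hq, mul_two, two_pow_pred_add_self hs]
      exact x.val_lt
    interval_cases q
    · left; rwa [mul_zero, ZMod.val_eq_zero] at hq
    · right; rw [mul_one, ← val_half hs] at hq; exact ZMod.val_injective _ hq
  · rintro (rfl | rfl)
    · simp
    · rw [val_half hs]

lemma val_mod_eq_iff (hs : 1 ≤ s) (a b : ZMod (2 ^ s)) :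
    a.val % 2 ^ (s - 1) = b.val % 2 ^ (s - 1) ↔ a - b = 0 ∨ a - b = half s := by
  let π := ZMod.castHom (pow_dvd_pow 2 (Nat.sub_le s 1)) (ZMod (2 ^ (s - 1)))
  have hπ : ∀ x, π x = (x.val : ZMod (2 ^ (s - 1))) := fun x => ZMod.cast_eq_val x
  rw [← dvd_val_iff_eq_zero_or_eq_half hs, ← ZMod.natCast_eq_zero_iff, ← hπ, map_sub,
    sub_eq_zero, hπ, hπ, ZMod.natCast_eq_natCast_iff']

lemma two_nsmul_eq_zero_iff (hs : 1 ≤ s) (y : ZMod (2 ^ s)) :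
    2 • y = 0 ↔ y = 0 ∨ y = half s := by
  rw [← dvd_val_iff_eq_zero_or_eq_half hs, ← Nat.mul_dvd_mul_iff_left two_pos, ← pow_succ',
    Nat.sub_add_cancel hs, ← ZMod.natCast_eq_zero_iff, Nat.cast_mul, ZMod.natCast_zmod_val,
    nsmul_eq_mul, Nat.cast_ofNat]

lemma exists_nsmul_eq_half (hs : 1 ≤ s) {α : ZMod (2 ^ s)} (hα : α ≠ 0) :
    ∃ k : ℕ, k • α = half s := by
  obtain ⟨e, -, he⟩ := (Nat.dvd_prime_pow Nat.prime_two).1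
    ((addOrderOf_dvd_card (x := α)).trans (ZMod.card _).dvd)
  have he0 : e ≠ 0 := by
    rintro rfl
    exact hα (AddMonoid.addOrderOf_eq_one_iff.1 he)
  refine ⟨2 ^ (e - 1), ((two_nsmul_eq_zero_iff hs _).1 ?_).resolve_left ?_⟩
  · rw [← mul_nsmul', ← pow_succ', Nat.sub_add_cancel (Nat.pos_of_ne_zero he0), ← he,
      addOrderOf_nsmul_eq_zero]
  · refine nsmul_ne_zero_of_lt_addOrderOf (pow_pos two_pos _).ne' ?_
    rw [he]
    exact Nat.pow_lt_pow_right one_lt_two (by omega)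

def homWeight (s : ℕ) (e : ZMod (2 ^ s)) : ℕ :=
  if e = 0 then 0 else if e = half s then 2 ^ (s - 1) else 2 ^ (s - 2)

@[simp]
lemma homWeight_zero : homWeight s 0 = 0 := if_pos rfl

lemma homWeight_half (hs : 1 ≤ s) : homWeight s (half s) = 2 ^ (s - 1) := by
  rw [homWeight, if_neg (half_ne_zero hs), if_pos rfl]

lemma homWeight_eq_zero_iff {e : ZMod (2 ^ s)} : homWeight s e = 0 ↔ e = 0 := by
  refine ⟨fun h => ?_, fun h => h ▸ homWeight_zero⟩
  unfold homWeight at h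
  split_ifs at h with h0
  · exact h0
  all_goals exact absurd h (pow_pos two_pos _).ne'

lemma homWeight_add_homWeight_add_half (hs : 2 ≤ s) (e : ZMod (2 ^ s)) :
    homWeight s e + homWeight s (e + half s) = 2 ^ (s - 1) := by
  have hT := half_add_half (s := s) (by omega)
  by_cases h0 : e = 0
  · rw [h0, zero_add, homWeight_zero, homWeight_half (by omega), zero_add]
  by_cases hT' : e = half s
  · rw [hT', hT, homWeight_half (by omega), homWeight_zero, add_zero]
  have h1 : e + half s ≠ 0 := fun h => hT' (by linear_combination h - hT)
  have h2 : e + half s ≠ half s := fun h => h0 (by linear_combination h)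
  rw [homWeight, if_neg h0, if_neg hT', homWeight, if_neg h1, if_neg h2, ← two_mul,
    two_pow_pred_eq_two_mul hs]

lemma gdigit_eq_gdigit_iff (a b : ZMod (2 ^ s)) (j : ℕ) :
    gdigit s a j = gdigit s b j ↔ a.val.testBit j = b.val.testBit j := by
  unfold gdigit
  cases a.val.testBit j <;> cases b.val.testBit j <;> decide

lemma val_mod_eq_iff_forall_gdigit_eq (a b : ZMod (2 ^ s)) :
    a.val % 2 ^ (s - 1) = b.val % 2 ^ (s - 1) ↔
      ∀ j : Fin (s - 1), gdigit s a j = gdigit s b j := by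
  simp only [gdigit_eq_gdigit_iff]
  constructor
  · intro h j
    simpa [Nat.testBit_mod_two_pow, j.isLt] using congrArg (Nat.testBit · j) h
  · intro h
    refine Nat.eq_of_testBit_eq fun j => ?_
    rw [Nat.testBit_mod_two_pow, Nat.testBit_mod_two_pow]
    by_cases hj : j < s - 1
    · rw [h ⟨j, hj⟩]
    · simp [hj]

lemma eq_of_forall_gdigit_eq {a b : ZMod (2 ^ s)} (h : ∀ j < s, gdigit s a j = gdigit s b j) :
    a = b := by
  refine ZMod.val_injective _ (Nat.eq_of_testBit_eq fun j => ?_)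
  by_cases hj : j < s
  · exact (gdigit_eq_gdigit_iff a b j).1 (h j hj)
  · have hle : 2 ^ s ≤ 2 ^ j := Nat.pow_le_pow_right two_pos (by omega)
    rw [Nat.testBit_lt_two_pow (a.val_lt.trans_le hle),
      Nat.testBit_lt_two_pow (b.val_lt.trans_le hle)]

lemma gray_add_single (u : ZMod (2 ^ s)) (y : Fin (s - 1) → ZMod 2) (j : Fin (s - 1)) :
    gray s u (y + Pi.single j 1) = gray s u y + gdigit s u j := by
  change _ + (fun i : Fin (s - 1) => gdigit s u i) ⬝ᵥ (y + Pi.single j 1) =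
    _ + (fun i : Fin (s - 1) => gdigit s u i) ⬝ᵥ y + _
  rw [dotProduct_add, dotProduct_single, mul_one, add_assoc]

lemma gray_sub_gray_of_val_mod_eq {a b : ZMod (2 ^ s)}
    (h : a.val % 2 ^ (s - 1) = b.val % 2 ^ (s - 1)) (y : Fin (s - 1) → ZMod 2) :
    gray s a y - gray s b y = gdigit s a (s - 1) - gdigit s b (s - 1) := by
  have hlow := (val_mod_eq_iff_forall_gdigit_eq a b).1 h
  simp only [gray, hlow]
  ring

lemma two_mul_card_filter_ne_zero {G : Type*} [AddGroup G] [Fintype G] (f : G → ZMod 2) (g : G)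
    (hf : ∀ y, f (y + g) = f y + 1) :
    2 * #{y | f y ≠ 0} = Fintype.card G := by
  have hZ2 : ∀ t : ZMod 2, t + 1 = 0 ↔ t ≠ 0 := by decide
  have hswap : #{y | f y ≠ 0} = #{y | ¬f y ≠ 0} := by
    refine Finset.card_bij' (fun y _ => y + g) (fun y _ => y - g) ?_ ?_ ?_ ?_
    · simp [hf, hZ2]
    · intro y hy
      simp only [mem_filter, mem_univ, true_and, not_not] at hy ⊢
      rwa [← hZ2, ← hf, sub_add_cancel]
    · intro y _; exact add_sub_cancel_right y g
    · intro y _; exact sub_add_cancel y g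
  rw [two_mul, ← Finset.card_univ]
  nth_rewrite 2 [hswap]
  exact Finset.card_filter_add_card_filter_not _

lemma hammingDist_gray_of_sub_eq_half (hs : 1 ≤ s) {a b : ZMod (2 ^ s)} (hab : a - b = half s) :
    hammingDist (gray s a) (gray s b) = 2 ^ (s - 1) := by
  have hlow := (val_mod_eq_iff hs a b).2 (Or.inr hab)
  have htop : gdigit s a (s - 1) ≠ gdigit s b (s - 1) := by
    intro htop
    have hab' : a = b := eq_of_forall_gdigit_eq fun j hj => by
      rcases lt_or_eq_of_le (Nat.le_sub_one_of_lt hj) with hj' | rfl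
      · exact (val_mod_eq_iff_forall_gdigit_eq a b).1 hlow ⟨j, hj'⟩
      · exact htop
    exact half_ne_zero hs (by rw [← hab, hab', sub_self])
  rw [hammingDist, filter_true_of_mem, card_univ]
  · simp
  intro y _
  rw [← sub_ne_zero, gray_sub_gray_of_val_mod_eq hlow, sub_ne_zero]
  exact htop

lemma hammingDist_gray_of_gdigit_ne {a b : ZMod (2 ^ s)} {j : Fin (s - 1)}
    (hj : gdigit s a j ≠ gdigit s b j) :
    hammingDist (gray s a) (gray s b) = 2 ^ (s - 2) := by
  have hflip : ∀ y, gray s a (y + Pi.single j 1) - gray s b (y + Pi.single j 1) =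
      gray s a y - gray s b y + 1 := by
    intro y
    have hZ2 : ∀ x x' : ZMod 2, x ≠ x' → x - x' = 1 := by decide
    rw [gray_add_single, gray_add_single]
    linear_combination hZ2 _ _ hj
  have h2 := two_mul_card_filter_ne_zero (fun y => gray s a y - gray s b y) _ hflip
  simp only [sub_ne_zero, Fintype.card_fun, ZMod.card, Fintype.card_fin] at h2
  rw [two_pow_pred_eq_two_mul (by have := j.pos; omega)] at h2
  rw [hammingDist]
  omega

lemma hammingDist_gray (hs : 2 ≤ s) (a b : ZMod (2 ^ s)) :
    hammingDist (gray s a) (gray s b) = homWeight s (a - b) := by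
  by_cases h0 : a - b = 0
  · rw [sub_eq_zero.1 h0, hammingDist_self, sub_self, homWeight_zero]
  by_cases hT : a - b = half s
  · rw [hT, homWeight_half (by omega), hammingDist_gray_of_sub_eq_half (by omega) hT]
  obtain ⟨j, hj⟩ : ∃ j : Fin (s - 1), gdigit s a j ≠ gdigit s b j := by
    by_contra! h
    exact (not_or.2 ⟨h0, hT⟩) ((val_mod_eq_iff (by omega) a b).1
      ((val_mod_eq_iff_forall_gdigit_eq a b).2 h))
  rw [homWeight, if_neg h0, if_neg hT, hammingDist_gray_of_gdigit_ne hj]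

lemma sum_homWeight_of_shift (hs : 2 ≤ s) {G : Type*} [Fintype G] (f : G → ZMod (2 ^ s))
    (σ : G ≃ G) (hσ : ∀ g, f (σ g) = f g + half s) :
    ∑ g, homWeight s (f g) = Fintype.card G * 2 ^ (s - 2) := by
  have hshift : ∑ g, homWeight s (f g) = ∑ g, homWeight s (f g + half s) := by
    simp only [← hσ]
    exact (σ.sum_comp (fun g => homWeight s (f g))).symm
  have htwice : 2 * ∑ g, homWeight s (f g) = Fintype.card G * 2 ^ (s - 1) := by
    rw [two_mul]
    nth_rewrite 2 [hshift]
    simp [← Finset.sum_add_distrib, homWeight_add_homWeight_add_half hs]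
  rw [two_pow_pred_eq_two_mul hs, mul_left_comm] at htwice
  omega

lemma sum_homWeight_add_nsmul (hs : 2 ≤ s) {M : ℕ} [NeZero M] {α : ZMod (2 ^ s)}
    (hM : M • α = 0) (hα : α ≠ 0) (e : ZMod (2 ^ s)) :
    ∑ j : Fin M, homWeight s (e + (j : ℕ) • α) = M * 2 ^ (s - 2) := by
  obtain ⟨k, hk⟩ := exists_nsmul_eq_half (by omega) hα
  rw [sum_homWeight_of_shift hs _ (Equiv.addRight (Fin.ofNat M k)), Fintype.card_fin]
  intro j
  rw [Equiv.coe_addRight, Fin.val_add, Fin.val_ofNat, ← nsmul_eq_mod_nsmul _ hM, add_nsmul,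
    ← nsmul_eq_mod_nsmul _ hM, hk, add_assoc]

section Norm

variable {ι : Type} [Fintype ι]

def homNorm (s : ℕ) (u : ι → ZMod (2 ^ s)) : ℕ := ∑ k, homWeight s (u k)

lemma homNorm_zero : homNorm s (0 : ι → ZMod (2 ^ s)) = 0 := by simp [homNorm]

lemma homNorm_eq_zero_iff {u : ι → ZMod (2 ^ s)} : homNorm s u = 0 ↔ u = 0 := by
  simp only [homNorm, Finset.sum_eq_zero_iff, Finset.mem_univ, true_implies,
    homWeight_eq_zero_iff, funext_iff, Pi.zero_apply]

lemma hammingDist_PhiMap (hs : 2 ≤ s) (u v : ι → ZMod (2 ^ s)) :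
    hammingDist (PhiMap s u) (PhiMap s v) = homNorm s (u - v) := by
  simp only [hammingDist, Finset.card_filter, Fintype.sum_prod_type, homNorm, Pi.sub_apply,
    ← hammingDist_gray hs]
  rfl

lemma PhiMap_injective (hs : 2 ≤ s) : Function.Injective (PhiMap (ι := ι) s) := by
  intro u v h
  have := hammingDist_PhiMap hs u v
  rwa [h, hammingDist_self, eq_comm, homNorm_eq_zero_iff, sub_eq_zero] at this

lemma distSet_image_PhiMap (hs : 2 ≤ s) (D : AddSubgroup (ι → ZMod (2 ^ s))) :
    {d | ∃ x ∈ PhiMap s '' (D : Set (ι → ZMod (2 ^ s))),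
      ∃ y ∈ PhiMap s '' (D : Set (ι → ZMod (2 ^ s))), x ≠ y ∧ hammingDist x y = d} =
      homNorm s '' {c | c ∈ D ∧ c ≠ 0} := by
  ext d
  constructor
  · rintro ⟨_, ⟨u, hu, rfl⟩, _, ⟨v, hv, rfl⟩, hne, rfl⟩
    refine ⟨u - v, ⟨D.sub_mem hu hv, sub_ne_zero.2 fun h => hne (h ▸ rfl)⟩, ?_⟩
    rw [hammingDist_PhiMap hs]
  · rintro ⟨c, ⟨hc, hc0⟩, rfl⟩
    refine ⟨_, ⟨c, hc, rfl⟩, _, ⟨0, D.zero_mem, rfl⟩,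
      fun h => hc0 (PhiMap_injective hs h), ?_⟩
    rw [hammingDist_PhiMap hs, sub_zero]

end Norm

section Ci

variable {n i : ℕ}

lemma replicate_finProdFinEquiv {α : Type} {m : ℕ} (c : Fin n → α) (j : Fin m) (r : Fin n) :
    replicate m n c (finProdFinEquiv (j, r)) = c r := by
  simp only [replicate, finProdFinEquiv_apply_val, Nat.add_mul_mod_self_left,
    Nat.mod_eq_of_lt r.isLt]

lemma wRep_finProdFinEquiv (j : Fin (2 ^ (s - i + 1))) (r : Fin n) :
    wRep s n i (finProdFinEquiv (j, r)) = (j : ℕ) • (2 : ZMod (2 ^ s)) ^ (i - 1) := by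
  have hn : 0 < n := r.pos
  simp only [wRep, finProdFinEquiv_apply_val, Nat.add_mul_div_left _ _ hn,
    Nat.div_eq_of_lt r.isLt, zero_add, nsmul_eq_mul]

lemma replicate_add_smul_wRep_apply (c : Fin n → ZMod (2 ^ s)) (l : ZMod (2 ^ s))
    (j : Fin (2 ^ (s - i + 1))) (r : Fin n) :
    (replicate (2 ^ (s - i + 1)) n c + l • wRep s n i) (finProdFinEquiv (j, r)) =
      c r + (j : ℕ) • (l * 2 ^ (i - 1)) := by
  rw [Pi.add_apply, Pi.smul_apply, replicate_finProdFinEquiv, wRep_finProdFinEquiv, smul_eq_mul,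
    mul_smul_comm]

lemma homNorm_replicate_add_smul_wRep (c : Fin n → ZMod (2 ^ s)) (l : ZMod (2 ^ s)) :
    homNorm s (replicate (2 ^ (s - i + 1)) n c + l • wRep s n i) =
      ∑ r, ∑ j : Fin (2 ^ (s - i + 1)),
        homWeight s (c r + (j : ℕ) • (l * 2 ^ (i - 1))) := by
  rw [homNorm, ← finProdFinEquiv.sum_comp, Fintype.sum_prod_type, Finset.sum_comm]
  simp only [replicate_add_smul_wRep_apply]

lemma homNorm_replicate_add_smul_wRep_of_eq_zero (c : Fin n → ZMod (2 ^ s)) {l : ZMod (2 ^ s)}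
    (hl : l * 2 ^ (i - 1) = 0) :
    homNorm s (replicate (2 ^ (s - i + 1)) n c + l • wRep s n i) =
      2 ^ (s - i + 1) * homNorm s c := by
  rw [homNorm_replicate_add_smul_wRep, homNorm, Finset.mul_sum]
  simp [hl]

lemma two_pow_mul_two_pow_eq_zero (hi : 1 ≤ i) (his : i ≤ s) :
    (2 : ZMod (2 ^ s)) ^ (s - i + 1) * 2 ^ (i - 1) = 0 := by
  rw [← pow_add, show s - i + 1 + (i - 1) = s by omega]
  exact_mod_cast ZMod.natCast_self (2 ^ s)

lemma homNorm_replicate_add_smul_wRep_of_ne_zero (hs : 2 ≤ s) (hi : 1 ≤ i) (his : i ≤ s)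
    (c : Fin n → ZMod (2 ^ s)) {l : ZMod (2 ^ s)} (hl : l * 2 ^ (i - 1) ≠ 0) :
    homNorm s (replicate (2 ^ (s - i + 1)) n c + l • wRep s n i) =
      2 ^ (s - i + 1) * (2 ^ (s - 2) * n) := by
  have hM : 2 ^ (s - i + 1) • (l * 2 ^ (i - 1)) = 0 := by
    rw [nsmul_eq_mul, Nat.cast_pow, Nat.cast_ofNat, mul_left_comm,
      two_pow_mul_two_pow_eq_zero hi his, mul_zero]
  simp only [homNorm_replicate_add_smul_wRep, sum_homWeight_add_nsmul hs hM hl,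
    Finset.sum_const, Finset.card_univ, Fintype.card_fin, smul_eq_mul]
  ring

def ciAddSubgroup (C : AddSubgroup (Fin n → ZMod (2 ^ s))) (i : ℕ) :
    AddSubgroup (Fin (2 ^ (s - i + 1) * n) → ZMod (2 ^ s)) where
  carrier := Ci s n C i
  add_mem' := by
    rintro _ _ ⟨c, hc, l, rfl⟩ ⟨c', hc', l', rfl⟩
    refine ⟨c + c', C.add_mem hc hc', l + l', ?_⟩
    rw [add_smul, add_add_add_comm]
    rfl
  zero_mem' := ⟨0, C.zero_mem, 0, by rw [zero_smul, add_zero]; rfl⟩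
  neg_mem' := by
    rintro _ ⟨c, hc, l, rfl⟩
    refine ⟨-c, C.neg_mem hc, -l, ?_⟩
    rw [neg_smul, neg_add]
    rfl

lemma smul_wRep_eq_val_mod (hi : 1 ≤ i) (his : i ≤ s) (l : ZMod (2 ^ s)) :
    l • wRep s n i = ((l.val % 2 ^ (s - i + 1) : ℕ) : ZMod (2 ^ s)) • wRep s n i := by
  funext k
  simp only [Pi.smul_apply, smul_eq_mul, wRep]
  conv_lhs => rw [← ZMod.natCast_zmod_val l, ← Nat.mod_add_div l.val (2 ^ (s - i + 1))]
  push_cast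
  linear_combination ((l.val / 2 ^ (s - i + 1) : ℕ) * ((k / n : ℕ) : ZMod (2 ^ s))) *
    two_pow_mul_two_pow_eq_zero hi his

lemma natCast_mul_two_pow_injective (hi : 1 ≤ i) (his : i ≤ s) :
    Function.Injective
      fun t : Fin (2 ^ (s - i + 1)) => ((t : ℕ) : ZMod (2 ^ s)) * 2 ^ (i - 1) := by
  intro t t' h
  have hlt : ∀ u : Fin (2 ^ (s - i + 1)), (u : ℕ) * 2 ^ (i - 1) < 2 ^ s := fun u =>
    (Nat.mul_lt_mul_of_pos_right u.isLt (by positivity)).trans_eq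
      (by rw [← pow_add]; congr 1; omega)
  have hcast :
      (((t : ℕ) * 2 ^ (i - 1) : ℕ) : ZMod (2 ^ s)) = ((t' : ℕ) * 2 ^ (i - 1) : ℕ) := by
    push_cast
    exact h
  have hval := congrArg ZMod.val hcast
  rw [ZMod.val_natCast_of_lt (hlt t), ZMod.val_natCast_of_lt (hlt t')] at hval
  exact Fin.ext (Nat.eq_of_mul_eq_mul_right (by positivity) hval)

lemma card_Ci (hn : 0 < n) (hi : 1 ≤ i) (his : i ≤ s) (C : Set (Fin n → ZMod (2 ^ s))) :
    Nat.card (Ci s n C i) = Nat.card C * 2 ^ (s - i + 1) := by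
  let g : C × Fin (2 ^ (s - i + 1)) → Fin (2 ^ (s - i + 1) * n) → ZMod (2 ^ s) :=
    fun p => replicate _ n p.1 + ((p.2 : ℕ) : ZMod (2 ^ s)) • wRep s n i
  have hrange : Set.range g = Ci s n C i := by
    ext x
    constructor
    · rintro ⟨⟨⟨c, hc⟩, t⟩, rfl⟩
      exact ⟨c, hc, _, rfl⟩
    · rintro ⟨c, hc, l, rfl⟩
      refine ⟨⟨⟨c, hc⟩, ⟨l.val % 2 ^ (s - i + 1), Nat.mod_lt _ (by positivity)⟩⟩, ?_⟩
      simp only [g, smul_wRep_eq_val_mod hi his l]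
  have hg : Function.Injective g := by
    rintro ⟨⟨c, hc⟩, t⟩ ⟨⟨c', hc'⟩, t'⟩ h
    have hcoord : ∀ (j : Fin (2 ^ (s - i + 1))) (r : Fin n),
        c r + (j : ℕ) • ((t : ℕ) * 2 ^ (i - 1)) =
          c' r + (j : ℕ) • ((t' : ℕ) * 2 ^ (i - 1) : ZMod (2 ^ s)) := fun j r => by
      simpa only [g, replicate_add_smul_wRep_apply] using
        congrFun h (finProdFinEquiv (j, r))
    obtain rfl : c = c' := funext fun r => by simpa using hcoord 0 r
    have h1 := add_left_cancel (hcoord ⟨1, Nat.one_lt_two_pow (by omega)⟩ ⟨0, hn⟩)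
    rw [one_nsmul, one_nsmul] at h1
    exact Prod.ext rfl (natCast_mul_two_pow_injective hi his h1)
  rw [← hrange, Nat.card_range_of_injective hg, Nat.card_prod, Nat.card_fin]

lemma isLeast_homNorm_ciAddSubgroup (hs : 2 ≤ s) (hi : 1 ≤ i) (his : i ≤ s)
    {C : AddSubgroup (Fin n → ZMod (2 ^ s))}
    (hC : IsLeast (homNorm s '' {c | c ∈ C ∧ c ≠ 0}) (2 ^ (s - 2) * n)) :
    IsLeast (homNorm s '' {x | x ∈ ciAddSubgroup C i ∧ x ≠ 0})
      (2 ^ (s - i + 1) * (2 ^ (s - 2) * n)) := by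
  constructor
  · obtain ⟨c, ⟨hc, hc0⟩, hwc⟩ := hC.1
    have hw := homNorm_replicate_add_smul_wRep_of_eq_zero (i := i) c (zero_mul (2 ^ (i - 1)))
    refine ⟨_, ⟨⟨c, hc, 0, rfl⟩, fun h0 => hc0 ?_⟩, by rw [hw, hwc]⟩
    rw [h0, homNorm_zero, eq_comm, mul_eq_zero, homNorm_eq_zero_iff] at hw
    exact hw.resolve_left (pow_pos two_pos _).ne'
  · rintro _ ⟨x, ⟨⟨c, hc, l, rfl⟩, hx0⟩, rfl⟩
    by_cases hl : l * 2 ^ (i - 1) = 0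
    · have hw := homNorm_replicate_add_smul_wRep_of_eq_zero c hl
      have hc0 : c ≠ 0 := by
        rintro rfl
        rw [homNorm_zero, mul_zero, homNorm_eq_zero_iff] at hw
        exact hx0 hw
      rw [hw]
      exact Nat.mul_le_mul_left _ (hC.2 ⟨c, ⟨hc, hc0⟩, rfl⟩)
    · exact (homNorm_replicate_add_smul_wRep_of_ne_zero hs hi his c hl).ge

end Ci

end CarletGray

open CarletGray in
theorem Ci_isHadamard (s n : ℕ) (hs : 2 ≤ s) (C : AddSubgroup (Fin n → ZMod (2^s)))
    (hH : IsHadamardCode (PhiMap s '' (C : Set (Fin n → ZMod (2^s)))) (2 ^ (s - 1) * n)) :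
    ∀ i, 1 ≤ i → i ≤ s →
      IsHadamardCode (PhiMap s '' Ci s n (C : Set (Fin n → ZMod (2^s))) i)
        (2 ^ (s - i + 1) * (2 ^ (s - 1) * n)) := by
  intro i hi his
  obtain ⟨-, hcard, hmin⟩ := hH
  have hhalf : ∀ m, 2 ^ (s - 1) * m / 2 = 2 ^ (s - 2) * m := fun m => by
    rw [two_pow_pred_eq_two_mul hs, mul_assoc, Nat.mul_div_cancel_left _ two_pos]
  rw [Nat.card_image_of_injective (PhiMap_injective hs)] at hcard
  rw [distSet_image_PhiMap hs, hhalf] at hmin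
  have hn : 0 < n := by
    obtain ⟨c, ⟨-, hc0⟩, -⟩ := hmin.1
    exact Nat.pos_of_ne_zero fun hn => hc0 (funext fun r => (hn ▸ r).elim0)
  refine ⟨?_, ?_, ?_⟩
  · simp only [Fintype.card_prod, Fintype.card_fin, Fintype.card_fun, ZMod.card]
    ring
  · rw [Nat.card_image_of_injective (PhiMap_injective hs), card_Ci hn hi his, hcard]
    ring
  · rw [mul_left_comm, hhalf, mul_left_comm]
    exact (distSet_image_PhiMap hs (ciAddSubgroup C i)).symm ▸
      isLeast_homNorm_ciAddSubgroup hs hi his hmin
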